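/- Let μ be a finite measure on a measurable space X, and let Φ_j (j ∈ ℕ) and Φ be measurable functions from X to [0, ∞) such that for every p ∈ [1, ∞), Φ_j and Φ lie in L^p(μ) and ‖Φ_j − Φ‖_{L^p(μ)} → 0 as j → ∞. Then for every p ∈ [1, ∞), the functions Φ_j² log(Φ_j²) and Φ² log(Φ²) lie in L^p(μ) and ‖Φ_j² log(Φ_j²) − Φ² log(Φ²)‖_{L^p(μ)} → 0 as j → ∞. -/

import Mathlib

/-!
By the mean value theorem, with `F'(t) = 2t (log t² + 1)` bounded by `6 (1 + t²)`, the map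
`F(t) = t² log t²` satisfies `|F a - F b| ≤ 6 (1 + a² + b²) |a - b|`. Hölder's inequality with
exponents `2p, 2p` then gives `‖F ∘ Φ_j - F ∘ Ψ‖_p ≤ 6 ‖Φ_j - Ψ‖_{2p} ‖1 + Φ_j² + Ψ²‖_{2p}`; the
last factor is controlled by `‖Φ_j‖_{4p}² + ‖Ψ‖_{4p}²`, which stays bounded since `Φ_j → Ψ` in
`L^{4p}`. The case `b = 0` of the pointwise bound gives `F ∘ Φ_j, F ∘ Ψ ∈ L^p`.
-/

open MeasureTheory Filter ENNReal

theorem hasDerivAt_sq_mul_log_sq {t : ℝ} (ht : t ≠ 0) :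
    HasDerivAt (fun u : ℝ => u ^ 2 * Real.log (u ^ 2)) ((Real.log (t ^ 2) + 1) * (2 * t)) t :=
  ((Real.hasDerivAt_mul_log (pow_ne_zero 2 ht)).comp (h := fun u : ℝ => u ^ 2) t
    (hasDerivAt_pow 2 t)).congr_deriv (by norm_num)

theorem continuous_sq_mul_log_sq : Continuous fun u : ℝ => u ^ 2 * Real.log (u ^ 2) :=
  Real.continuous_mul_log.comp (continuous_pow 2)

theorem abs_log_sq_add_one_mul_two_mul_le {t : ℝ} (ht : 0 < t) :
    |(Real.log (t ^ 2) + 1) * (2 * t)| ≤ 6 * (1 + t ^ 2) := by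
  rw [Real.log_pow, Nat.cast_ofNat]
  rcases le_or_gt t 1 with ht1 | ht1
  · have h := Real.abs_log_mul_self_lt t ht ht1
    rw [abs_lt] at h
    rw [abs_le]
    constructor <;> nlinarith
  · have h0 : 0 ≤ Real.log t := Real.log_nonneg ht1.le
    have h1 : Real.log t ≤ t - 1 := Real.log_le_sub_one_of_pos ht
    rw [abs_of_nonneg (by positivity)]
    nlinarith

theorem abs_sq_mul_log_sq_sub_le_of_nonneg {a b : ℝ} (ha : 0 ≤ a) (hb : 0 ≤ b) :
    |a ^ 2 * Real.log (a ^ 2) - b ^ 2 * Real.log (b ^ 2)| ≤ 6 * (1 + a ^ 2 + b ^ 2) * |a - b| := by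
  wlog hba : b < a generalizing a b
  · rcases (not_lt.1 hba).eq_or_lt with rfl | hab
    · simp
    · rw [abs_sub_comm, abs_sub_comm a]
      linarith [this hb ha hab]
  obtain ⟨c, ⟨hbc, hca⟩, hc⟩ := exists_hasDerivAt_eq_slope (fun u : ℝ => u ^ 2 * Real.log (u ^ 2))
    (fun t => (Real.log (t ^ 2) + 1) * (2 * t)) hba continuous_sq_mul_log_sq.continuousOn
    fun t ht => hasDerivAt_sq_mul_log_sq (hb.trans_lt ht.1).ne'
  rw [eq_div_iff (sub_pos.2 hba).ne'] at hc
  rw [← hc, abs_mul, abs_of_pos (sub_pos.2 hba)]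
  have hc2 : c ^ 2 ≤ a ^ 2 := pow_le_pow_left₀ (hb.trans hbc.le) hca.le 2
  gcongr
  exact (abs_log_sq_add_one_mul_two_mul_le (hb.trans_lt hbc)).trans (by nlinarith [sq_nonneg b])

theorem abs_sq_mul_log_sq_sub_le (a b : ℝ) :
    |a ^ 2 * Real.log (a ^ 2) - b ^ 2 * Real.log (b ^ 2)| ≤ 6 * (1 + a ^ 2 + b ^ 2) * |a - b| := by
  have h := abs_sq_mul_log_sq_sub_le_of_nonneg (abs_nonneg a) (abs_nonneg b)
  simp only [sq_abs] at h
  exact h.trans (mul_le_mul_of_nonneg_left (abs_abs_sub_abs_le_abs_sub a b) (by positivity))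

instance ENNReal.HolderTriple.two_mul_two_mul (p : ℝ≥0∞) : HolderTriple (2 * p) (2 * p) p where
  inv_add_inv_eq_inv := by
    rw [ENNReal.mul_inv (by simp) (by simp), ← add_mul, ENNReal.inv_two_add_inv_two, one_mul]

section

variable {X : Type*} [MeasurableSpace X] {μ : Measure X}

theorem eLpNorm_sq_eq (f : X → ℝ) (p : ℝ≥0∞) :
    eLpNorm (fun x => f x ^ 2) p μ = eLpNorm f (2 * p) μ ^ 2 := by
  have h : (fun x => f x ^ 2) = fun x => ‖f x‖ ^ (2 : ℝ) := by
    ext x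
    rw [Real.rpow_two, Real.norm_eq_abs, sq_abs]
  rw [h, eLpNorm_norm_rpow f two_pos, ENNReal.ofReal_ofNat, mul_comm, ENNReal.rpow_two]

theorem eLpNorm_sq_mul_log_sq_sub_le {p q r : ℝ≥0∞} [HolderTriple q r p] {f h : X → ℝ}
    (hf : AEStronglyMeasurable f μ) (hh : AEStronglyMeasurable h μ) :
    eLpNorm (fun x => f x ^ 2 * Real.log (f x ^ 2) - h x ^ 2 * Real.log (h x ^ 2)) p μ
      ≤ 6 * eLpNorm (f - h) q μ * eLpNorm (fun x => 1 + f x ^ 2 + h x ^ 2) r μ := by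
  calc _ ≤ eLpNorm (fun x => 6 * (f - h) x * (1 + f x ^ 2 + h x ^ 2)) p μ := by
        refine eLpNorm_mono fun x => ?_
        rw [Real.norm_eq_abs, Real.norm_eq_abs, Pi.sub_apply, abs_mul, abs_mul,
          abs_of_pos (by norm_num : (0 : ℝ) < 6),
          abs_of_pos (by positivity : 0 < 1 + f x ^ 2 + h x ^ 2)]
        linarith [abs_sq_mul_log_sq_sub_le (f x) (h x)]
    _ ≤ _ := by
        exact_mod_cast eLpNorm_le_eLpNorm_mul_eLpNorm'_of_norm (p := q) (q := r) (hf.sub hh)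
          (by fun_prop : AEStronglyMeasurable (fun x => 1 + f x ^ 2 + h x ^ 2) μ)
          (fun u v : ℝ => 6 * u * v) 6 (.of_forall fun x => by simp)

theorem eLpNorm_one_add_sq_add_sq_le {p : ℝ≥0∞} (hp : 1 ≤ 2 * p) {f h : X → ℝ}
    (hf : AEStronglyMeasurable f μ) (hh : AEStronglyMeasurable h μ) :
    eLpNorm (fun x => 1 + f x ^ 2 + h x ^ 2) (2 * p) μ
      ≤ eLpNorm (fun _ => (1 : ℝ)) (2 * p) μ + eLpNorm f (4 * p) μ ^ 2
        + eLpNorm h (4 * p) μ ^ 2 := by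
  have hsplit : (fun x => 1 + f x ^ 2 + h x ^ 2)
      = (fun _ => (1 : ℝ)) + (fun x => f x ^ 2) + fun x => h x ^ 2 := rfl
  have h4p : 4 * p = 2 * (2 * p) := by rw [← mul_assoc]; norm_num
  rw [hsplit, h4p, ← eLpNorm_sq_eq, ← eLpNorm_sq_eq]
  refine (eLpNorm_add_le (by fun_prop) (by fun_prop) hp).trans ?_
  gcongr
  exact eLpNorm_add_le (by fun_prop) (by fun_prop) hp

variable [IsFiniteMeasure μ]

theorem MeasureTheory.MemLp.sq_mul_log_sq {p : ℝ≥0∞} {f : X → ℝ} (hf : MemLp f (4 * p) μ) :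
    MemLp (fun x => f x ^ 2 * Real.log (f x ^ 2)) p μ := by
  have h4p : 4 * p = 2 * (2 * p) := by rw [← mul_assoc]; norm_num
  have hsq : MemLp (fun x => f x ^ 2) (2 * p) μ :=
    ⟨hf.1.pow 2, by rw [eLpNorm_sq_eq, ← h4p]; exact pow_lt_top hf.2⟩
  have hf2 : MemLp f (2 * p) μ := hf.mono_exponent (by gcongr; norm_num)
  have hbound : MemLp (fun x => 6 * (f x * (1 + f x ^ 2))) p μ :=
    (((memLp_const (1 : ℝ)).add hsq).mul' hf2).const_mul 6
  have hmeas : AEStronglyMeasurable (fun x => f x ^ 2 * Real.log (f x ^ 2)) μ :=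
    continuous_sq_mul_log_sq.comp_aestronglyMeasurable hf.1
  refine hbound.of_le hmeas (.of_forall fun x => ?_)
  have h := abs_sq_mul_log_sq_sub_le (f x) 0
  rw [zero_pow two_ne_zero, zero_mul, sub_zero, add_zero, sub_zero] at h
  calc ‖f x ^ 2 * Real.log (f x ^ 2)‖ ≤ 6 * (1 + f x ^ 2) * |f x| := h
    _ = ‖6 * (f x * (1 + f x ^ 2))‖ := by
      rw [Real.norm_eq_abs, abs_mul, abs_mul, abs_of_pos (by norm_num : (0 : ℝ) < 6),
        abs_of_pos (by positivity : 0 < 1 + f x ^ 2)]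
      ring

theorem tendsto_eLpNorm_sq_mul_log_sq_sub {ι : Type*} {l : Filter ι} {p : ℝ≥0∞} (hp : 1 ≤ 2 * p)
    {Φ : ι → X → ℝ} {Ψ : X → ℝ} (hΦ : ∀ j, AEStronglyMeasurable (Φ j) μ)
    (hΨ : MemLp Ψ (4 * p) μ)
    (h2 : Tendsto (fun j => eLpNorm (Φ j - Ψ) (2 * p) μ) l (nhds 0))
    (h4 : Tendsto (fun j => eLpNorm (Φ j - Ψ) (4 * p) μ) l (nhds 0)) :
    Tendsto (fun j => eLpNorm (fun x => Φ j x ^ 2 * Real.log (Φ j x ^ 2)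
      - Ψ x ^ 2 * Real.log (Ψ x ^ 2)) p μ) l (nhds 0) := by
  have hp4 : 1 ≤ 4 * p := hp.trans (by gcongr; norm_num)
  set B := eLpNorm Ψ (4 * p) μ
  set M := eLpNorm (fun _ => (1 : ℝ)) (2 * p) μ + (1 + B) ^ 2 + B ^ 2 with hM_def
  have hM : M ≠ ⊤ := by
    have := hΨ.eLpNorm_ne_top
    have := (memLp_const (μ := μ) (p := 2 * p) (1 : ℝ)).eLpNorm_ne_top
    finiteness
  have hK : ∀ᶠ j in l, eLpNorm (fun x => 1 + Φ j x ^ 2 + Ψ x ^ 2) (2 * p) μ ≤ M := by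
    filter_upwards [h4.eventually_le_const zero_lt_one] with j hj
    have hΦB : eLpNorm (Φ j) (4 * p) μ ≤ 1 + B :=
      calc eLpNorm (Φ j) (4 * p) μ = eLpNorm (Φ j - Ψ + Ψ) (4 * p) μ := by rw [sub_add_cancel]
        _ ≤ eLpNorm (Φ j - Ψ) (4 * p) μ + B := eLpNorm_add_le ((hΦ j).sub hΨ.1) hΨ.1 hp4
        _ ≤ 1 + B := by gcongr
    exact (eLpNorm_one_add_sq_add_sq_le hp (hΦ j) hΨ.1).trans (by rw [hM_def]; gcongr)
  have hle : ∀ᶠ j in l, eLpNorm (fun x => Φ j x ^ 2 * Real.log (Φ j x ^ 2)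
      - Ψ x ^ 2 * Real.log (Ψ x ^ 2)) p μ ≤ 6 * eLpNorm (Φ j - Ψ) (2 * p) μ * M := by
    filter_upwards [hK] with j hj
    exact (eLpNorm_sq_mul_log_sq_sub_le (hΦ j) hΨ.1).trans (by gcongr)
  have hlim : Tendsto (fun j => 6 * eLpNorm (Φ j - Ψ) (2 * p) μ * M) l (nhds 0) := by
    simpa using ENNReal.Tendsto.mul_const (ENNReal.Tendsto.const_mul h2 (.inr (by simp)))
      (.inr hM)
  exact tendsto_of_tendsto_of_tendsto_of_le_of_le' tendsto_const_nhds hlim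
    (.of_forall fun _ => zero_le) hle

end

theorem sq_log_sq_tendsto_Lp_general
    {X : Type*} [MeasurableSpace X] (μ : Measure X) [IsFiniteMeasure μ]
    (Φ : ℕ → X → ℝ) (Ψ : X → ℝ)
    (hmem : ∀ p : ℝ≥0∞, 1 ≤ p → p ≠ ⊤ → (∀ j, MemLp (Φ j) p μ) ∧ MemLp Ψ p μ)
    (hconv : ∀ p : ℝ≥0∞, 1 ≤ p → p ≠ ⊤ →
      Tendsto (fun j => eLpNorm (Φ j - Ψ) p μ) atTop (nhds 0)) :
    ∀ p : ℝ≥0∞, 1 ≤ p → p ≠ ⊤ →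
      (∀ j, MemLp (fun x => (Φ j x) ^ 2 * Real.log ((Φ j x) ^ 2)) p μ) ∧
      MemLp (fun x => (Ψ x) ^ 2 * Real.log ((Ψ x) ^ 2)) p μ ∧
      Tendsto (fun j => eLpNorm
        (fun x => (Φ j x) ^ 2 * Real.log ((Φ j x) ^ 2)
          - (Ψ x) ^ 2 * Real.log ((Ψ x) ^ 2)) p μ) atTop (nhds 0) := by
  intro p hp hp_top
  have h2p : 1 ≤ 2 * p := hp.trans (le_mul_of_one_le_left' (by norm_num))
  have h4p : 1 ≤ 4 * p := hp.trans (le_mul_of_one_le_left' (by norm_num))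
  obtain ⟨hΦ, hΨ⟩ := hmem (4 * p) h4p (by finiteness)
  exact ⟨fun j => (hΦ j).sq_mul_log_sq, hΨ.sq_mul_log_sq,
    tendsto_eLpNorm_sq_mul_log_sq_sub h2p (fun j => (hΦ j).1) hΨ
      (hconv _ h2p (by finiteness)) (hconv _ h4p (by finiteness))⟩

/-- If `Φ_j → Φ` in `L^p(μ)` for every finite `p ≥ 1` (μ a finite measure, all functions
nonnegative and measurable), then `Φ_j² log Φ_j² → Φ² log Φ²` in `L^p(μ)` for every
finite `p ≥ 1`.  (In Mathlib, `Real.log 0 = 0`, matching the convention `0 · log 0 = 0`.) -/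
theorem sq_log_sq_tendsto_Lp
    {X : Type*} [MeasurableSpace X] (μ : Measure X) [IsFiniteMeasure μ]
    (Φ : ℕ → X → ℝ) (Ψ : X → ℝ)
    (hΦm : ∀ j, Measurable (Φ j)) (hΨm : Measurable Ψ)
    (hΦnn : ∀ j x, 0 ≤ Φ j x) (hΨnn : ∀ x, 0 ≤ Ψ x)
    (hmem : ∀ p : ℝ≥0∞, 1 ≤ p → p ≠ ⊤ → (∀ j, MemLp (Φ j) p μ) ∧ MemLp Ψ p μ)
    (hconv : ∀ p : ℝ≥0∞, 1 ≤ p → p ≠ ⊤ →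
      Tendsto (fun j => eLpNorm (Φ j - Ψ) p μ) atTop (nhds 0)) :
    ∀ p : ℝ≥0∞, 1 ≤ p → p ≠ ⊤ →
      (∀ j, MemLp (fun x => (Φ j x) ^ 2 * Real.log ((Φ j x) ^ 2)) p μ) ∧
      MemLp (fun x => (Ψ x) ^ 2 * Real.log ((Ψ x) ^ 2)) p μ ∧
      Tendsto (fun j => eLpNorm
        (fun x => (Φ j x) ^ 2 * Real.log ((Φ j x) ^ 2)
          - (Ψ x) ^ 2 * Real.log ((Ψ x) ^ 2)) p μ) atTop (nhds 0) :=
  sq_log_sq_tendsto_Lp_general μ Φ Ψ hmem hconv
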